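/- arXiv:1808.03324 — 8 statements merged into one kernel-verified Lean document; each statement's English description precedes it below -/
import Mathlib

section
/- For every n ≥ 2, the path Pₙ on n vertices admits an edge-magic proper total coloring; that is, there is a proper total coloring f of Pₙ and a constant k with f(u) + f(uv) + f(v) = k for every edge uv. -/
def IsProperTotalColoring {V : Type*} (G : SimpleGraph V) (k : ℕ)
    (fV : V → ℕ) (fE : Sym2 V → ℕ) : Prop :=
  (∀ v, fV v ∈ Finset.Icc 1 k) ∧
  (∀ e ∈ G.edgeSet, fE e ∈ Finset.Icc 1 k) ∧
  (∀ u v, G.Adj u v → fV u ≠ fV v) ∧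
  (∀ e ∈ G.edgeSet, ∀ e' ∈ G.edgeSet, e ≠ e' → (∃ w, w ∈ e ∧ w ∈ e') → fE e ≠ fE e') ∧
  (∀ v, ∀ e ∈ G.edgeSet, v ∈ e → fV v ≠ fE e)

/-- The periodic vertex coloring with pattern `1, 2, 4, 3`. -/
def pcol (m : ℕ) : ℕ :=
  match m % 4 with
  | 0 => 1
  | 1 => 2
  | 2 => 4
  | _ => 3

lemma pcol_bounds (m : ℕ) : 1 ≤ pcol m ∧ pcol m ≤ 4 := by
  have h : m % 4 = 0 ∨ m % 4 = 1 ∨ m % 4 = 2 ∨ m % 4 = 3 := by omega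
  unfold pcol
  rcases h with h | h | h | h <;> simp [h]

lemma pcol_succ (m : ℕ) : pcol m ≠ pcol (m + 1) := by
  have h : m % 4 = 0 ∨ m % 4 = 1 ∨ m % 4 = 2 ∨ m % 4 = 3 := by omega
  unfold pcol
  rcases h with h | h | h | h <;>
    · have h1 : (m + 1) % 4 = (m % 4 + 1) % 4 := by omega
      simp [h, h1]

lemma pcol_succ2 (m : ℕ) : pcol m ≠ pcol (m + 2) := by
  have h : m % 4 = 0 ∨ m % 4 = 1 ∨ m % 4 = 2 ∨ m % 4 = 3 := by omega
  unfold pcol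
  rcases h with h | h | h | h <;>
    · have h2 : (m + 2) % 4 = (m % 4 + 2) % 4 := by omega
      simp [h, h2]

lemma pcol_edge_ne (m : ℕ) :
    pcol m ≠ 9 - (pcol m + pcol (m + 1)) ∧
    pcol (m + 1) ≠ 9 - (pcol m + pcol (m + 1)) := by
  have h : m % 4 = 0 ∨ m % 4 = 1 ∨ m % 4 = 2 ∨ m % 4 = 3 := by omega
  unfold pcol
  rcases h with h | h | h | h <;>
    · have h1 : (m + 1) % 4 = (m % 4 + 1) % 4 := by omega
      simp [h, h1]

lemma pcol_key (a b a' b' : ℕ) (hab : a + 1 = b) (hab' : a' + 1 = b')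
    (hne : a ≠ a') (hshare : a = a' ∨ a = b' ∨ b = a' ∨ b = b') :
    pcol a + pcol b ≠ pcol a' + pcol b' := by
  subst hab hab'
  have hcase : a = a' + 1 ∨ a' = a + 1 := by omega
  rcases hcase with h | h
  · subst h
    have := pcol_succ2 a'
    have h2 : a' + 1 + 1 = a' + 2 := rfl
    rw [h2]
    omega
  · subst h
    have := pcol_succ2 a
    have h2 : a + 1 + 1 = a + 2 := rfl
    rw [h2]
    omega

/-- For every `n ≥ 2`, the path on `n` vertices admits an edge-magic proper total
coloring: a proper total coloring `f` together with a constant `c` such that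
`f(u) + f(uv) + f(v) = c` for every edge `uv`. -/
theorem path_edge_magic_proper_total_coloring (n : ℕ) (hn : 2 ≤ n) :
    ∃ (k c : ℕ) (fV : Fin n → ℕ) (fE : Sym2 (Fin n) → ℕ),
      IsProperTotalColoring (SimpleGraph.pathGraph n) k fV fE ∧
      ∀ u v, (SimpleGraph.pathGraph n).Adj u v → fV u + fE s(u, v) + fV v = c := by
  refine ⟨6, 9, fun i => pcol i.val,
    Sym2.lift ⟨fun u v => 9 - (pcol u.val + pcol v.val), fun u v => by
      dsimp only; rw [Nat.add_comm]⟩, ⟨?_, ?_, ?_, ?_, ?_⟩, ?_⟩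
  · intro v
    have := pcol_bounds v.val
    simp only [Finset.mem_Icc]
    omega
  · intro e he
    induction e with
    | _ u v =>
      rw [SimpleGraph.mem_edgeSet, SimpleGraph.pathGraph_adj] at he
      simp only [Sym2.lift_mk, Finset.mem_Icc]
      have h1 := pcol_bounds u.val
      have h2 := pcol_bounds v.val
      rcases he with h | h
      · have := pcol_succ u.val
        rw [h] at this
        omega
      · have := pcol_succ v.val
        rw [h] at this
        omega
  · intro u v huv
    rw [SimpleGraph.pathGraph_adj] at huv
    rcases huv with h | h
    · have := pcol_succ u.val; rw [h] at this; exact this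
    · have := pcol_succ v.val; rw [h] at this; exact fun hh => this hh.symm
  · intro e he e' he' hne hw
    induction e with
    | _ u v =>
      induction e' with
      | _ u' v' =>
        rw [SimpleGraph.mem_edgeSet, SimpleGraph.pathGraph_adj] at he he'
        obtain ⟨w, hw1, hw2⟩ := hw
        simp only [Sym2.mem_iff] at hw1 hw2
        simp only [Sym2.lift_mk]
        -- reduce to a statement about natural numbers
        have hsum : pcol u.val + pcol v.val ≠ pcol u'.val + pcol v'.val := by
          -- normalize orientations
          have hval : u.val ≠ v.val := by rcases he with h | h <;> omega
          have hval' : u'.val ≠ v'.val := by rcases he' with h | h <;> omega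
          have hw1' : w.val = u.val ∨ w.val = v.val := by
            rcases hw1 with h | h <;> simp [h]
          have hw2' : w.val = u'.val ∨ w.val = v'.val := by
            rcases hw2 with h | h <;> simp [h]
          have hneval : ¬ ((u.val = u'.val ∧ v.val = v'.val) ∨
              (u.val = v'.val ∧ v.val = u'.val)) := by
            intro hc
            apply hne
            rcases hc with ⟨h1, h2⟩ | ⟨h1, h2⟩
            · rw [Fin.val_eq_val] at h1 h2; rw [h1, h2]
            · rw [Fin.val_eq_val] at h1 h2; rw [h1, h2, Sym2.eq_swap]
          rcases he with h | h <;> rcases he' with h' | h'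
          · exact pcol_key u.val v.val u'.val v'.val h h' (by omega) (by omega)
          · rw [Nat.add_comm (pcol u'.val)]
            exact pcol_key u.val v.val v'.val u'.val h h' (by omega) (by omega)
          · rw [Nat.add_comm (pcol u.val)]
            exact pcol_key v.val u.val u'.val v'.val h h' (by omega) (by omega)
          · rw [Nat.add_comm (pcol u.val), Nat.add_comm (pcol u'.val)]
            exact pcol_key v.val u.val v'.val u'.val h h' (by omega) (by omega)
        have b1 := pcol_bounds u.val
        have b2 := pcol_bounds v.val
        have b3 := pcol_bounds u'.val
        have b4 := pcol_bounds v'.val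
        omega
  · intro x e he hx
    induction e with
    | _ u v =>
      rw [SimpleGraph.mem_edgeSet, SimpleGraph.pathGraph_adj] at he
      simp only [Sym2.mem_iff] at hx
      simp only [Sym2.lift_mk]
      rcases he with h | h
      · have hkey := pcol_edge_ne u.val
        rw [h] at hkey
        rcases hx with rfl | rfl
        · exact hkey.1
        · exact hkey.2
      · have hkey := pcol_edge_ne v.val
        rw [h] at hkey
        rw [Nat.add_comm (pcol u.val)]
        rcases hx with rfl | rfl
        · exact hkey.2
        · exact hkey.1
  · intro u v huv
    rw [SimpleGraph.pathGraph_adj] at huv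
    simp only [Sym2.lift_mk]
    have b1 := pcol_bounds u.val
    have b2 := pcol_bounds v.val
    omega
end

section
/- For n ≥ 3, the cycle Cₙ admits an edge-magic proper total coloring (a proper total coloring f with f(u) + f(uv) + f(v) constant over all edges uv) if n ≡ 0 (mod 3). -/
/-- For `n ≥ 3` with `n ≡ 0 (mod 3)`, the cycle `Cₙ` admits an edge-magic proper total
coloring: a proper total coloring `f` with `f(u) + f(uv) + f(v)` constant over edges. -/
theorem cycle_edge_magic_proper_total_coloring (n : ℕ) (hn : 3 ≤ n) (h3 : n % 3 = 0) :
    ∃ (k c : ℕ) (fV : Fin n → ℕ) (fE : Sym2 (Fin n) → ℕ),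
      IsProperTotalColoring (SimpleGraph.cycleGraph n) k fV fE ∧
      ∀ u v, (SimpleGraph.cycleGraph n).Adj u v → fV u + fE s(u, v) + fV v = c := by
  obtain ⟨m, rfl⟩ : ∃ m, n = m + 3 := ⟨n - 3, by omega⟩
  have hm3 : m % 3 = 0 := by omega
  set fV : Fin (m + 3) → ℕ := fun v => v.val % 3 + 1 with hfV
  set fE : Sym2 (Fin (m + 3)) → ℕ :=
    Sym2.lift ⟨fun u v => 9 - (fV u + fV v), fun u v => by dsimp only; rw [Nat.add_comm (fV u)]⟩ with hfE
  have hadd : ∀ u : Fin (m + 3), ((u + 1 : Fin (m + 3))).val % 3 = (u.val + 1) % 3 := by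
    intro u
    have h1 : ((u + 1 : Fin (m + 3))).val = (u.val + 1) % (m + 3) := by
      simp [Fin.add_def]
    rw [h1, Nat.mod_mod_of_dvd _ (by omega : 3 ∣ m + 3)]
  have hsub : ∀ u : Fin (m + 3), ((u - 1 : Fin (m + 3))).val % 3 = (u.val + 2) % 3 := by
    intro u
    have h1 : ((u - 1 : Fin (m + 3))).val = (m + 3 - 1 + u.val) % (m + 3) := by
      simp [Fin.sub_def]
    rw [h1, Nat.mod_mod_of_dvd _ (by omega : 3 ∣ m + 3)]
    omega
  have hadj : ∀ u v : Fin (m + 3), (SimpleGraph.cycleGraph (m + 3)).Adj u v →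
      v = u + 1 ∨ u = v + 1 := by
    intro u v h
    rw [SimpleGraph.cycleGraph_adj'] at h
    rcases h with h | h
    · right
      have h' : u - v = 1 := by rw [Fin.ext_iff, h]; simp
      exact (sub_eq_iff_eq_add.mp h').trans (add_comm 1 v)
    · left
      have h' : v - u = 1 := by rw [Fin.ext_iff, h]; simp
      exact (sub_eq_iff_eq_add.mp h').trans (add_comm 1 u)
  have hedge : ∀ e ∈ (SimpleGraph.cycleGraph (m + 3)).edgeSet, ∀ w, w ∈ e →
      e = s(w, w + 1) ∨ e = s(w, w - 1) := by
    intro e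
    induction e using Sym2.ind with
    | _ a b =>
      intro he w hw
      rw [SimpleGraph.mem_edgeSet] at he
      rw [Sym2.mem_iff] at hw
      rcases hadj a b he with rfl | rfl
      · rcases hw with rfl | rfl
        · left; rfl
        · right; rw [add_sub_cancel_right, Sym2.eq_swap]
      · rcases hw with rfl | rfl
        · right; rw [add_sub_cancel_right]
        · left; rw [Sym2.eq_swap]
  refine ⟨6, 9, fV, fE, ⟨?_, ?_, ?_, ?_, ?_⟩, ?_⟩
  · intro v
    simp only [hfV, Finset.mem_Icc]
    omega
  · intro e he
    induction e using Sym2.ind with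
    | _ a b =>
      rw [SimpleGraph.mem_edgeSet] at he
      rcases hadj a b he with rfl | rfl
      · simp only [hfE, Sym2.lift_mk, hfV, Finset.mem_Icc]
        rw [hadd a]; omega
      · simp only [hfE, Sym2.lift_mk, hfV, Finset.mem_Icc]
        rw [hadd b]; omega
  · intro u v h
    rcases hadj u v h with rfl | rfl
    · simp only [hfV]; rw [hadd u]; omega
    · simp only [hfV]; rw [hadd v]; omega
  · intro e he e' he' hne hw
    obtain ⟨w, hw1, hw2⟩ := hw
    rcases hedge e he w hw1 with rfl | rfl <;>
      rcases hedge e' he' w hw2 with rfl | rfl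
    · exact absurd rfl hne
    · simp only [hfE, Sym2.lift_mk, hfV]; rw [hadd w, hsub w]; omega
    · simp only [hfE, Sym2.lift_mk, hfV]; rw [hadd w, hsub w]; omega
    · exact absurd rfl hne
  · intro v e he hv
    induction e using Sym2.ind with
    | _ a b =>
      rw [SimpleGraph.mem_edgeSet] at he
      rcases hadj a b he with rfl | rfl
      · simp only [hfE, Sym2.lift_mk, hfV]; rw [hadd a]
        rcases (show a.val % 3 = 0 ∨ a.val % 3 = 1 ∨ a.val % 3 = 2 by omega) with h0|h0|h0 <;>
          omega
      · simp only [hfE, Sym2.lift_mk, hfV]; rw [hadd b]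
        rcases (show b.val % 3 = 0 ∨ b.val % 3 = 1 ∨ b.val % 3 = 2 by omega) with h0|h0|h0 <;>
          omega
  · intro u v h
    simp only [hfE, Sym2.lift_mk, hfV]
    omega
end

section
/- Every connected graph G with p vertices and q edges (p ≥ 2) can be split into a tree with q + 1 vertices. Formally, there exists a tree H with q + 1 vertices and a surjective map φ : V(H) → V(G) such that the map e ↦ φ(e) induced on edges gives a bijection from E(H) to E(G) (i.e., the multiset {φ(x)φ(y) : xy ∈ E(H)} equals E(G) with each edge appearing exactly once). -/
/-!
Take a spanning tree `T` of `G` and, for every edge `uv` of `G` outside `T`, hang a new pendant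
vertex on `u` that `φ` sends to `v` (on the vertices of `T`, `φ` is the identity). Pendant
vertices keep a tree a tree, and the edges of the result correspond one-to-one to
`E(T) ∪ (E(G) \ E(T)) = E(G)`; a tree with `q` edges has `q + 1` vertices.
-/

open Function Set SimpleGraph

namespace SimpleGraph

variable {V ι : Type*}

def addPendants (T : SimpleGraph V) (a : ι → V) : SimpleGraph (V ⊕ ι) :=
  T.map Embedding.inl ⊔ ⨆ i, edge (.inl (a i)) (.inr i)

variable (T : SimpleGraph V) (a : ι → V)

lemma edgeSet_addPendants :
    (T.addPendants a).edgeSet =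
      Sym2.map Sum.inl '' T.edgeSet ∪ range fun i ↦ s(Sum.inl (a i), Sum.inr i) := by
  simp only [addPendants, edgeSet_sup, edgeSet_map, edgeSet_iSup,
    edgeSet_edge_of_ne Sum.inl_ne_inr, iUnion_singleton_eq_range]
  rfl

lemma disjoint_edgeSet_addPendants :
    Disjoint (Sym2.map Sum.inl '' T.edgeSet) (range fun i ↦ s(Sum.inl (a i), Sum.inr i)) := by
  rw [Set.disjoint_right]
  rintro _ ⟨i, rfl⟩ ⟨e, -, he⟩
  have : Sum.inr i ∈ Sym2.map Sum.inl e := he ▸ Sym2.mem_mk_right _ _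
  simp [Sym2.mem_map] at this

lemma addPendants_adj_pendant (i : ι) : (T.addPendants a).Adj (.inl (a i)) (.inr i) := by
  rw [← mem_edgeSet, edgeSet_addPendants]
  exact Or.inr ⟨i, rfl⟩

lemma Connected.addPendants {T : SimpleGraph V} (hT : T.Connected) (a : ι → V) :
    (T.addPendants a).Connected := by
  have hinl (u v : V) : (T.addPendants a).Reachable (.inl u) (.inl v) :=
    ((hT u v).map (Embedding.map .inl T).toHom).mono le_sup_left
  obtain ⟨v₀⟩ := hT.nonempty
  refine (connected_iff_exists_forall_reachable _).2 ⟨.inl v₀, ?_⟩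
  rintro (u | i)
  · exact hinl v₀ u
  · exact (hinl v₀ (a i)).trans (T.addPendants_adj_pendant a i).reachable

lemma IsTree.addPendants [Finite V] [Finite ι] {T : SimpleGraph V} (hT : T.IsTree) (a : ι → V) :
    (T.addPendants a).IsTree := by
  rw [isTree_iff_connected_and_card] at hT ⊢
  refine ⟨hT.1.addPendants a, ?_⟩
  have hpend : Injective fun i ↦ (s(Sum.inl (a i), Sum.inr i) : Sym2 (V ⊕ ι)) := fun i j h ↦
    (by simpa using h : a i = a j ∧ i = j).2
  rw [Nat.card_sum, ← hT.2, Nat.card_coe_set_eq, Nat.card_coe_set_eq, edgeSet_addPendants,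
    ncard_union_eq (disjoint_edgeSet_addPendants T a),
    ncard_image_of_injective _ (Sym2.map.injective Sum.inl_injective),
    ncard_range_of_injective hpend]
  ring

lemma bijOn_addPendants (b : ι → V) (hinj : Injective fun i ↦ s(a i, b i))
    (hdisj : ∀ i, s(a i, b i) ∉ T.edgeSet) :
    BijOn (Sym2.map (Sum.elim id b)) (T.addPendants a).edgeSet
      (T.edgeSet ∪ range fun i ↦ s(a i, b i)) := by
  have hinl : Sym2.map (Sum.elim id b) ∘ Sym2.map Sum.inl = id := by
    rw [← Sym2.map_comp, Sum.elim_comp_inl, Sym2.map_id]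
  have h₁ : BijOn (Sym2.map (Sum.elim id b)) (Sym2.map Sum.inl '' T.edgeSet) T.edgeSet := by
    have := (InjOn.image_of_comp (hinl ▸ injOn_id T.edgeSet)).bijOn_image
    rwa [← image_comp, hinl, image_id] at this
  have h₂ : BijOn (Sym2.map (Sum.elim id b)) (range fun i ↦ s(Sum.inl (a i), Sum.inr i))
      (range fun i ↦ s(a i, b i)) := by
    have := (Injective.injOn_range (g := Sym2.map (Sum.elim id b))
      (f := fun i ↦ s(Sum.inl (a i), Sum.inr i)) hinj).bijOn_image
    rwa [← range_comp] at this
  rw [edgeSet_addPendants]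
  refine h₁.union h₂ ((injOn_union (disjoint_edgeSet_addPendants T a)).2
    ⟨h₁.injOn, h₂.injOn, ?_⟩)
  rintro _ ⟨e, he, rfl⟩ _ ⟨i, rfl⟩ h
  refine hdisj i ?_
  rw [show s(a i, b i) = _ from h.symm]
  exact h₁.mapsTo (mem_image_of_mem _ he)

lemma Iso.bijOn_edgeSet {W : Type*} {G : SimpleGraph V} {G' : SimpleGraph W} (f : G ≃g G') :
    BijOn (Sym2.map f) G.edgeSet G'.edgeSet :=
  ⟨fun _ ↦ f.map_mem_edgeSet_iff.2, (Sym2.map.injective f.injective).injOn,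
    fun e he ↦ ⟨Sym2.map f.symm e, f.symm.map_mem_edgeSet_iff.2 he, by simp [Sym2.map_map]⟩⟩

end SimpleGraph

theorem connected_graph_splits_into_tree_general {V : Type*} [Fintype V] [DecidableEq V]
    (G : SimpleGraph V) [DecidableRel G.Adj] (hconn : G.Connected) :
    ∃ H : SimpleGraph (Fin (G.edgeFinset.card + 1)),
      H.Connected ∧ H.IsAcyclic ∧
      ∃ φ : Fin (G.edgeFinset.card + 1) → V, Function.Surjective φ ∧
        Set.BijOn (Sym2.map φ) H.edgeSet G.edgeSet := by
  obtain ⟨T, hTG, hT⟩ := hconn.exists_isTree_le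
  let ι := ↥(G.edgeSet \ T.edgeSet)
  choose a b hab using fun e : ι ↦ Sym2.exists.1 ⟨e.1, rfl⟩
  have hpair : (fun e ↦ s(a e, b e)) = Subtype.val := funext fun e ↦ (hab e).symm
  have hbij : BijOn (Sym2.map (Sum.elim id b)) (T.addPendants a).edgeSet G.edgeSet := by
    have := T.bijOn_addPendants a b (hpair ▸ Subtype.val_injective) fun e ↦ (hab e).symm ▸ e.2.2
    rwa [hpair, Subtype.range_coe, union_sdiff_cancel (edgeSet_mono hTG)] at this
  have hH := hT.addPendants a
  have hcard : Nat.card (V ⊕ ι) = G.edgeFinset.card + 1 := by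
    rw [← (isTree_iff_connected_and_card.1 hH).2, Nat.card_congr (hbij.equiv _),
      Nat.card_eq_fintype_card, edgeFinset_card]
  let e : Fin (G.edgeFinset.card + 1) ≃ V ⊕ ι := ((Finite.equivFin _).trans (finCongr hcard)).symm
  have hHe := (Iso.comap e (T.addPendants a)).isTree_iff.2 hH
  refine ⟨_, hHe.1, hHe.2, Sum.elim id b ∘ e, fun v ↦ ⟨e.symm (.inl v), by simp⟩, ?_⟩
  rw [Sym2.map_comp]
  exact hbij.comp (Iso.comap e _).bijOn_edgeSet

/-- Every connected graph `G` with `p ≥ 2` vertices and `q` edges can be split into a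
tree `H` with `q + 1` vertices: there is a surjective vertex map `φ : V(H) → V(G)` whose
induced map on edges is a bijection from `E(H)` onto `E(G)`. -/
theorem connected_graph_splits_into_tree {V : Type*} [Fintype V] [DecidableEq V]
    (G : SimpleGraph V) [DecidableRel G.Adj] (hconn : G.Connected)
    (hp : 2 ≤ Fintype.card V) :
    ∃ H : SimpleGraph (Fin (G.edgeFinset.card + 1)),
      H.Connected ∧ H.IsAcyclic ∧
      ∃ φ : Fin (G.edgeFinset.card + 1) → V, Function.Surjective φ ∧
        Set.BijOn (Sym2.map φ) H.edgeSet G.edgeSet :=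
  connected_graph_splits_into_tree_general G hconn
end

section
/- Let G be a bipartite graph with p vertices and q edges admitting a set-ordered graceful labelling f (a bijection-type vertex labelling f : V(G) → {0,...,q} injective on vertices, with induced edge labels |f(u)−f(v)| forming exactly {1,...,q}, and with max f(X) < min f(Y) for the bipartition (X,Y)). Then G admits a set-ordered odd-graceful labelling: an injective g : V(G) → {0,...,2q−1} with {|g(u)−g(v)| : uv ∈ E(G)} = {1,3,5,...,2q−1} and max g(X) < min g(Y). (Explicitly, g(x) = 2f(x) for x ∈ X and g(y) = 2f(y) − 1 for y ∈ Y works.) -/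
/-- If a bipartite `(p,q)`-graph `G` with bipartition `(X,Y)` admits a set-ordered
graceful labelling (injective `f : V → {0,...,q}` whose edge labels `|f(u)-f(v)|` are
exactly `{1,...,q}`, with `max f(X) < min f(Y)`), then `G` admits a set-ordered
odd-graceful labelling: an injective `g : V → {0,...,2q-1}` whose edge labels are
exactly the odd numbers `{1,3,...,2q-1}`, again with `max g(X) < min g(Y)`. -/
theorem set_ordered_graceful_to_odd_graceful {V : Type*} [Fintype V] [DecidableEq V]
    (G : SimpleGraph V) [DecidableRel G.Adj]
    (X Y : Finset V) (hpart : ∀ v, v ∈ X ↔ v ∉ Y)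
    (hbip : ∀ u v, G.Adj u v → (u ∈ X ∧ v ∈ Y) ∨ (u ∈ Y ∧ v ∈ X))
    (q : ℕ) (hq : q = G.edgeFinset.card)
    (f : V → ℕ) (hinj : Function.Injective f) (hle : ∀ v, f v ≤ q)
    (hgrace : {d : ℕ | ∃ u v, G.Adj u v ∧ d = max (f u) (f v) - min (f u) (f v)}
        = Set.Icc 1 q)
    (hso : ∀ x ∈ X, ∀ y ∈ Y, f x < f y) :
    ∃ g : V → ℕ, Function.Injective g ∧ (∀ v, g v ≤ 2 * q - 1) ∧
      {d : ℕ | ∃ u v, G.Adj u v ∧ d = max (g u) (g v) - min (g u) (g v)}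
        = {d : ℕ | Odd d ∧ d ≤ 2 * q - 1} ∧
      (∀ x ∈ X, ∀ y ∈ Y, g x < g y) := by
  classical
  have hY : ∀ v, v ∉ X → v ∈ Y := fun v h => by have := hpart v; tauto
  have hX : ∀ v, v ∈ X → v ∉ Y := fun v h => by have := hpart v; tauto
  by_cases hq0 : q = 0
  · subst hq0
    refine ⟨f, hinj, fun v => by have := hle v; omega, ?_, hso⟩
    rw [hgrace]
    ext d
    simp only [Set.mem_Icc, Set.mem_setOf_eq, Nat.odd_iff]
    omega
  · have hq1 : 1 ≤ q := Nat.one_le_iff_ne_zero.mpr hq0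
    have hqmem : q ∈ {d : ℕ | ∃ u v, G.Adj u v ∧ d = max (f u) (f v) - min (f u) (f v)} := by
      rw [hgrace]; exact Set.mem_Icc.mpr ⟨hq1, le_refl q⟩
    obtain ⟨u0, v0, hadj0, hd0⟩ := hqmem
    have key : ∃ y ∈ Y, f y = q := by
      rcases hbip u0 v0 hadj0 with ⟨hu, hv⟩ | ⟨hu, hv⟩
      · have h1 := hso u0 hu v0 hv
        have h2 := hle v0
        exact ⟨v0, hv, by rw [max_eq_right h1.le, min_eq_left h1.le] at hd0; omega⟩
      · have h1 := hso v0 hv u0 hu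
        have h2 := hle u0
        exact ⟨u0, hu, by rw [max_eq_left h1.le, min_eq_right h1.le] at hd0; omega⟩
    obtain ⟨y0, hy0, hfy0⟩ := key
    have hXlt : ∀ x ∈ X, f x < q := fun x hx => hfy0 ▸ hso x hx y0 hy0
    set g : V → ℕ := fun v => if v ∈ X then 2 * f v else 2 * f v - 1 with hg
    have hedge : ∀ u v, G.Adj u v → u ∈ X → v ∈ Y →
        max (g u) (g v) - min (g u) (g v) = 2 * (f v - f u) - 1 ∧
        1 ≤ f v - f u ∧ f v - f u ≤ q := by
      intro u v hadj hu hv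
      have hlt := hso u hu v hv
      have hgu : g u = 2 * f u := if_pos hu
      have hgv : g v = 2 * f v - 1 := if_neg (fun h => hX v h hv)
      have hm : max (f u) (f v) - min (f u) (f v) ∈ Set.Icc 1 q := by
        rw [← hgrace]; exact ⟨u, v, hadj, rfl⟩
      rw [Set.mem_Icc, max_eq_right hlt.le, min_eq_left hlt.le] at hm
      rw [hgu, hgv]
      refine ⟨?_, by omega, by omega⟩
      rw [max_eq_right (by omega), min_eq_left (by omega)]
      omega
    refine ⟨g, ?_, ?_, ?_, ?_⟩
    · intro a b hab
      simp only [hg] at hab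
      by_cases ha : a ∈ X <;> by_cases hb : b ∈ X
      · rw [if_pos ha, if_pos hb] at hab
        exact hinj (by omega)
      · rw [if_pos ha, if_neg hb] at hab
        have h := hso a ha b (hY b hb)
        exfalso; omega
      · rw [if_neg ha, if_pos hb] at hab
        have h := hso b hb a (hY a ha)
        exfalso; omega
      · rw [if_neg ha, if_neg hb] at hab
        exact hinj (by omega)
    · intro v
      by_cases hv : v ∈ X
      · have := hXlt v hv
        simp only [hg, if_pos hv]
        omega
      · have := hle v
        simp only [hg, if_neg hv]
        omega
    · ext d
      simp only [Set.mem_setOf_eq]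
      constructor
      · rintro ⟨u, v, hadj, rfl⟩
        rcases hbip u v hadj with ⟨hu, hv⟩ | ⟨hu, hv⟩
        · obtain ⟨he, h1, h2⟩ := hedge u v hadj hu hv
          rw [he, Nat.odd_iff]
          omega
        · obtain ⟨he, h1, h2⟩ := hedge v u hadj.symm hv hu
          rw [max_comm (g u) (g v), min_comm (g u) (g v), he, Nat.odd_iff]
          omega
      · rintro ⟨hodd, hd⟩
        rw [Nat.odd_iff] at hodd
        have hm : (d / 2 + 1) ∈
            {d : ℕ | ∃ u v, G.Adj u v ∧ d = max (f u) (f v) - min (f u) (f v)} := by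
          rw [hgrace]; exact Set.mem_Icc.mpr ⟨by omega, by omega⟩
        obtain ⟨u, v, hadj, hkv⟩ := hm
        rcases hbip u v hadj with ⟨hu, hv⟩ | ⟨hu, hv⟩
        · obtain ⟨he, h1, h2⟩ := hedge u v hadj hu hv
          refine ⟨u, v, hadj, ?_⟩
          rw [he]
          have hl : f u ≤ f v := (hso u hu v hv).le
          rw [max_eq_right hl, min_eq_left hl] at hkv
          omega
        · obtain ⟨he, h1, h2⟩ := hedge v u hadj.symm hv hu
          refine ⟨v, u, hadj.symm, ?_⟩
          rw [he]
          have hl : f v ≤ f u := (hso v hv u hu).le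
          rw [max_eq_left hl, min_eq_right hl] at hkv
          omega
    · intro x hx yy hyy
      have := hso x hx yy hyy
      simp only [hg, if_pos hx, if_neg (fun h => hX yy h hyy)]
      omega
end

section
/- Let T be a tree on p vertices with bipartition (X,Y), |X| = s, admitting a set-ordered graceful labelling f (with f(xᵢ) = i−1 for i = 1,...,s and f(yⱼ) = s+j−1 for j = 1,...,t, t = p−s). Define f₄ : V(T) → {0,...,p−1} by f₄(xᵢ) = f(xᵢ) and f₄(yⱼ) = f(y_{t−j+1}). Then f₄ is injective and the induced edge labels f₄(u) + f₄(v) mod (p−1) over all edges uv ∈ E(T) are exactly the set {0, 1, ..., p−2}; i.e., f₄ is a felicitous labelling of T. -/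
/-- From a set-ordered graceful labelling `f` of a tree `T` on `p` vertices with
bipartition `(X,Y)`, `|X| = s` (so `f(X) = {0,...,s-1}` and `f(Y) = {s,...,p-1}`), the
labelling `f₄` given by `f₄(x) = f(x)` for `x ∈ X` and `f₄(y) = s + p - 1 - f(y)` for
`y ∈ Y` (i.e. `f₄(yⱼ) = f(y_{t-j+1})`) is injective and felicitous: the induced edge
labels `f₄(u) + f₄(v) mod (p-1)` over the edges of `T` are exactly `{0,...,p-2}`. -/
theorem set_ordered_graceful_to_felicitous {V : Type*} [Fintype V] [DecidableEq V]
    (T : SimpleGraph V) [DecidableRel T.Adj]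
    (hconn : T.Connected) (hacyc : T.IsAcyclic)
    (X Y : Finset V) (hpart : ∀ v, v ∈ X ↔ v ∉ Y)
    (hbip : ∀ u v, T.Adj u v → (u ∈ X ∧ v ∈ Y) ∨ (u ∈ Y ∧ v ∈ X))
    (p s : ℕ) (hp : p = Fintype.card V) (hs : s = X.card)
    (f : V → ℕ) (hinj : Function.Injective f)
    (hX : ∀ x ∈ X, f x < s) (hY : ∀ y ∈ Y, s ≤ f y ∧ f y < p)
    (hgrace : {d : ℕ | ∃ u v, T.Adj u v ∧ d = max (f u) (f v) - min (f u) (f v)}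
        = Set.Icc 1 (p - 1)) :
    letI f₄ : V → ℕ := fun v => if v ∈ X then f v else s + p - 1 - f v
    Function.Injective f₄ ∧
    {d : ℕ | ∃ u v, T.Adj u v ∧ d = (f₄ u + f₄ v) % (p - 1)} = Set.Iio (p - 1) := by
  simp only []
  constructor
  · intro a b hab
    by_cases ha : a ∈ X <;> by_cases hb : b ∈ X <;>
      simp only [ha, hb, if_true, if_false] at hab
    · exact hinj hab
    · have hbY : b ∈ Y := not_not.mp fun h => hb ((hpart b).mpr h)
      have h1 := hX a ha
      have h2 := hY b hbY
      omega
    · have haY : a ∈ Y := not_not.mp fun h => ha ((hpart a).mpr h)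
      have h1 := hX b hb
      have h2 := hY a haY
      omega
    · have haY : a ∈ Y := not_not.mp fun h => ha ((hpart a).mpr h)
      have hbY : b ∈ Y := not_not.mp fun h => hb ((hpart b).mpr h)
      have h1 := hY a haY
      have h2 := hY b hbY
      exact hinj (by omega)
  · ext k
    simp only [Set.mem_setOf_eq, Set.mem_Iio]
    constructor
    · rintro ⟨u, v, huv, rfl⟩
      have h2 : 2 ≤ p := by
        rw [hp]; exact Fintype.one_lt_card_iff.mpr ⟨u, v, huv.ne⟩
      exact Nat.mod_lt _ (by omega)
    · intro hk
      have hq : 0 < p - 1 := by omega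
      set c := s + (p - 1) - 1 - k with hc
      have hdm := Nat.div_add_mod c (p - 1)
      set m := c / (p - 1) with hm
      set r := c % (p - 1) with hr
      have hrlt : r < p - 1 := Nat.mod_lt _ hq
      set Mm := (p - 1) * m with hMm
      have hd : r + 1 ∈ {d : ℕ | ∃ u v, T.Adj u v ∧
          d = max (f u) (f v) - min (f u) (f v)} := by
        rw [hgrace]
        simp only [Set.mem_Icc]
        omega
      obtain ⟨u, v, huv, hduv⟩ := hd
      obtain ⟨u, v, huv, hu, hv, hd2⟩ :
          ∃ u v, T.Adj u v ∧ u ∈ X ∧ v ∈ Y ∧ r + 1 = f v - f u := by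
        rcases hbip u v huv with ⟨hu, hv⟩ | ⟨hv, hu⟩
        · refine ⟨u, v, huv, hu, hv, ?_⟩
          have h1 := hX u hu
          have h2 := (hY v hv).1
          rwa [max_eq_right (by omega), min_eq_left (by omega)] at hduv
        · refine ⟨v, u, huv.symm, hu, hv, ?_⟩
          have h1 := hX v hu
          have h2 := (hY u hv).1
          rwa [max_eq_left (by omega), min_eq_right (by omega)] at hduv
      refine ⟨u, v, huv, ?_⟩
      have hvX : v ∉ X := fun h => (hpart v).mp h hv
      have h1 := hX u hu
      have h2 := hY v hv
      simp only [if_pos hu, if_neg hvX]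
      have hval : f u + (s + p - 1 - f v) = k + Mm := by omega
      rw [hval, hMm, Nat.add_mul_mod_self_left, Nat.mod_eq_of_lt hk]
end

section
/- A tree T on p vertices admits a set-ordered graceful labelling if and only if it admits a 6C-labelling. In particular, if f is a set-ordered graceful labelling of T with bipartition (X,Y), then the labelling F defined by F(w) = p + f(w) for vertices w and F(uv) = p − |f(u) − f(v)| for edges uv is a bijection from V(T) ∪ E(T) to {1,...,2p−1} satisfying: (i) F(uv) + |F(u)−F(v)| = p for every edge uv; (ii) every edge uv has F(uv) = |F(x)−F(y)| for some edge xy; (iii) min F(V(T)) > max F(E(T)); (iv) max F(X) < min F(Y). -/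
/-- A set-ordered graceful labelling of a graph `T` on `p = |V|` vertices with
bipartition `(X,Y)`: an injective vertex labelling into `{0,...,p-1}` whose edge labels
`|f(u)-f(v)|` form exactly `{1,...,p-1}`, with `max f(X) < min f(Y)`. -/
def IsSetOrderedGraceful {V : Type*} [Fintype V] (T : SimpleGraph V)
    (X Y : Finset V) (f : V → ℕ) : Prop :=
  Function.Injective f ∧ (∀ v, f v < Fintype.card V) ∧
  {d : ℕ | ∃ u v, T.Adj u v ∧ d = max (f u) (f v) - min (f u) (f v)}
    = Set.Icc 1 (Fintype.card V - 1) ∧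
  (∀ x ∈ X, ∀ y ∈ Y, f x < f y)

/-- A 6C-labelling of a graph `T` on `p` vertices with bipartition `(X,Y)`: a bijection
from `V(T) ∪ E(T)` onto `{1,...,2p-1}` (expressed by injectivity of the vertex part, the
edge part, their disjointness and the image condition) which is e-magic
(`F(uv) + |F(u)-F(v)|` is constant), ee-difference (each edge label is `|F(x)-F(y)|` for
some edge `xy`), EV-ordered (`min F(V) > max F(E)`), and set-ordered
(`max F(X) < min F(Y)`). -/
def Is6CLabelling {V : Type*} (T : SimpleGraph V) (X Y : Finset V) (p : ℕ)
    (fV : V → ℕ) (fE : Sym2 V → ℕ) : Prop :=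
  Function.Injective fV ∧
  Set.InjOn fE T.edgeSet ∧
  (∀ v, ∀ e ∈ T.edgeSet, fV v ≠ fE e) ∧
  (Set.range fV ∪ fE '' T.edgeSet) = Set.Icc 1 (2 * p - 1) ∧
  (∃ k, ∀ u v, T.Adj u v →
      fE s(u, v) + (max (fV u) (fV v) - min (fV u) (fV v)) = k) ∧
  (∀ u v, T.Adj u v → ∃ x y, T.Adj x y ∧
      fE s(u, v) = max (fV x) (fV y) - min (fV x) (fV y)) ∧
  (∀ v, ∀ e ∈ T.edgeSet, fE e < fV v) ∧
  (∀ x ∈ X, ∀ y ∈ Y, fV x < fV y)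

/-- A tree admits a set-ordered graceful labelling iff it admits a 6C-labelling; in
particular, from a set-ordered graceful labelling `f` the explicit assignment
`F(w) = p + f(w)` on vertices and `F(uv) = p - |f(u)-f(v)|` on edges is a 6C-labelling
(with e-magic constant `p`). -/
theorem set_ordered_graceful_iff_six_c {V : Type*} [Fintype V] [DecidableEq V]
    (T : SimpleGraph V) [DecidableRel T.Adj]
    (hconn : T.Connected) (hacyc : T.IsAcyclic)
    (X Y : Finset V) (hpart : ∀ v, v ∈ X ↔ v ∉ Y)
    (hbip : ∀ u v, T.Adj u v → (u ∈ X ∧ v ∈ Y) ∨ (u ∈ Y ∧ v ∈ X))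
    (p : ℕ) (hp : p = Fintype.card V) :
    ((∃ f, IsSetOrderedGraceful T X Y f) ↔ (∃ fV fE, Is6CLabelling T X Y p fV fE)) ∧
    (∀ f, IsSetOrderedGraceful T X Y f →
      Is6CLabelling T X Y p (fun w => p + f w)
        (Sym2.lift ⟨fun u v => p - (max (f u) (f v) - min (f u) (f v)),
          fun u v => by dsimp only; rw [max_comm, min_comm]⟩)) := by
  have hnonempty : Nonempty V := hconn.nonempty
  have hp1 : 1 ≤ p := by rw [hp]; exact Fintype.card_pos
  have hedge : T.edgeFinset.card + 1 = p := by
    rw [hp]; exact SimpleGraph.IsTree.card_edgeFinset ⟨hconn, hacyc⟩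
  -- the forward (explicit) construction
  have fwd : ∀ f, IsSetOrderedGraceful T X Y f →
      Is6CLabelling T X Y p (fun w => p + f w)
        (Sym2.lift ⟨fun u v => p - (max (f u) (f v) - min (f u) (f v)),
          fun u v => by dsimp only; rw [max_comm, min_comm]⟩) := by
    intro f hf
    obtain ⟨hinj, hlt0, hdiff0, hord⟩ := hf
    have hlt : ∀ v, f v < p := by intro v; rw [hp]; exact hlt0 v
    have hdiff : {d : ℕ | ∃ u v, T.Adj u v ∧ d = max (f u) (f v) - min (f u) (f v)}
        = Set.Icc 1 (p - 1) := by rw [hp]; exact hdiff0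
    have hd_mem : ∀ u v, T.Adj u v →
        1 ≤ max (f u) (f v) - min (f u) (f v) ∧ max (f u) (f v) - min (f u) (f v) ≤ p - 1 := by
      intro u v h
      have : (max (f u) (f v) - min (f u) (f v)) ∈ Set.Icc 1 (p - 1) := by
        rw [← hdiff]; exact ⟨u, v, h, rfl⟩
      exact ⟨this.1, this.2⟩
    have hsurjd : ∀ m, 1 ≤ m → m ≤ p - 1 →
        ∃ u v, T.Adj u v ∧ max (f u) (f v) - min (f u) (f v) = m := by
      intro m h1 h2
      have : m ∈ {d : ℕ | ∃ u v, T.Adj u v ∧ d = max (f u) (f v) - min (f u) (f v)} := by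
        rw [hdiff]; exact ⟨h1, h2⟩
      obtain ⟨u, v, huv, hm⟩ := this
      exact ⟨u, v, huv, hm.symm⟩
    have hsurjf : ∀ m, m < p → ∃ v, f v = m := by
      have hbij : Function.Bijective (fun v => (⟨f v, hlt v⟩ : Fin p)) := by
        rw [Fintype.bijective_iff_injective_and_card]
        refine ⟨fun a b hab => hinj (congrArg Fin.val hab), ?_⟩
        rw [Fintype.card_fin, hp]
      intro m hm
      obtain ⟨v, hv⟩ := hbij.2 ⟨m, hm⟩
      exact ⟨v, congrArg Fin.val hv⟩
    -- the difference function on Sym2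
    set D : Sym2 V → ℕ := Sym2.lift ⟨fun u v => max (f u) (f v) - min (f u) (f v),
      fun u v => by dsimp only; rw [max_comm, min_comm]⟩ with hD
    set fE : Sym2 V → ℕ := Sym2.lift ⟨fun u v => p - (max (f u) (f v) - min (f u) (f v)),
      fun u v => by dsimp only; rw [max_comm, min_comm]⟩ with hfE
    have hfED : ∀ e, fE e = p - D e := by
      intro e
      induction e using Sym2.ind with
      | _ u v => simp [hD, hfE]
    have hDbound : ∀ e ∈ T.edgeSet, 1 ≤ D e ∧ D e ≤ p - 1 := by
      intro e he
      induction e using Sym2.ind with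
      | _ u v =>
        rw [SimpleGraph.mem_edgeSet] at he
        simpa [hD] using hd_mem u v he
    have hDinj : Set.InjOn D T.edgeSet := by
      have himg : T.edgeFinset.image D = Finset.Icc 1 (p - 1) := by
        apply Finset.Subset.antisymm
        · intro m hm
          obtain ⟨e, he, rfl⟩ := Finset.mem_image.1 hm
          rw [SimpleGraph.mem_edgeFinset] at he
          exact Finset.mem_Icc.2 (hDbound e he)
        · intro m hm
          rw [Finset.mem_Icc] at hm
          obtain ⟨u, v, huv, hduv⟩ := hsurjd m hm.1 hm.2
          refine Finset.mem_image.2 ⟨s(u, v), ?_, ?_⟩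
          · rw [SimpleGraph.mem_edgeFinset, SimpleGraph.mem_edgeSet]; exact huv
          · simpa [hD] using hduv
      have hcard : (T.edgeFinset.image D).card = T.edgeFinset.card := by
        rw [himg, Nat.card_Icc]; omega
      have := Finset.injOn_of_card_image_eq hcard
      rwa [SimpleGraph.coe_edgeFinset] at this
    have hshift : ∀ a b : ℕ, max (p + a) (p + b) - min (p + a) (p + b) = max a b - min a b := by
      intro a b
      rcases le_total a b with h | h
      · rw [max_eq_right h, min_eq_left h, max_eq_right (Nat.add_le_add_left h p),
          min_eq_left (Nat.add_le_add_left h p)]; omega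
      · rw [max_eq_left h, min_eq_right h, max_eq_left (Nat.add_le_add_left h p),
          min_eq_right (Nat.add_le_add_left h p)]; omega
    refine ⟨?_, ?_, ?_, ?_, ⟨p, ?_⟩, ?_, ?_, ?_⟩
    · intro a b hab
      have hab' : p + f a = p + f b := hab
      exact hinj (by omega)
    · intro e1 he1 e2 he2 heq
      apply hDinj he1 he2
      have h1 := hDbound e1 he1
      have h2 := hDbound e2 he2
      rw [hfED e1, hfED e2] at heq
      omega
    · intro v e he
      have h1 := hDbound e he
      show p + f v ≠ fE e
      rw [hfED e]
      omega
    · ext n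
      simp only [Set.mem_union, Set.mem_range, Set.mem_image, Set.mem_Icc]
      constructor
      · rintro (⟨v, rfl⟩ | ⟨e, he, rfl⟩)
        · have := hlt v
          show 1 ≤ p + f v ∧ p + f v ≤ 2 * p - 1
          omega
        · have := hDbound e he
          rw [hfED e]; omega
      · rintro ⟨h1, h2⟩
        rcases le_or_gt p n with h | h
        · obtain ⟨v, hv⟩ := hsurjf (n - p) (by omega)
          exact Or.inl ⟨v, show p + f v = n by omega⟩
        · obtain ⟨u, v, huv, hduv⟩ := hsurjd (p - n) (by omega) (by omega)
          refine Or.inr ⟨s(u, v), (SimpleGraph.mem_edgeSet T).mpr huv, ?_⟩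
          rw [hfED]
          have : D s(u, v) = p - n := by simpa [hD] using hduv
          omega
    · intro u v huv
      have h1 := hd_mem u v huv
      have hval : fE s(u, v) = p - (max (f u) (f v) - min (f u) (f v)) := by simp [hfE]
      show fE s(u, v) + (max (p + f u) (p + f v) - min (p + f u) (p + f v)) = p
      rw [hval, hshift]
      omega
    · intro u v huv
      have h1 := hd_mem u v huv
      have hval : fE s(u, v) = p - (max (f u) (f v) - min (f u) (f v)) := by simp [hfE]
      obtain ⟨x, y, hxy, hdxy⟩ := hsurjd (p - (max (f u) (f v) - min (f u) (f v)))
        (by omega) (by omega)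
      refine ⟨x, y, hxy, ?_⟩
      show fE s(u, v) = max (p + f x) (p + f y) - min (p + f x) (p + f y)
      rw [hval, hshift, hdxy]
    · intro v e he
      have h1 := hDbound e he
      show fE e < p + f v
      rw [hfED e]
      omega
    · intro x hx y hy
      have := hord x hx y hy
      show p + f x < p + f y
      omega
  -- the backward direction
  have bwd : (∃ fV fE, Is6CLabelling T X Y p fV fE) → ∃ f, IsSetOrderedGraceful T X Y f := by
    rintro ⟨fV, fE, hVinj, hEinj, hVE, hrange, ⟨k, hmagic⟩, hee, hEV, hXY⟩
    classical
    set A : Finset ℕ := Finset.image fV Finset.univ with hAdef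
    set B : Finset ℕ := Finset.image fE T.edgeFinset with hBdef
    have hAcard : A.card = p := by
      rw [hAdef, Finset.card_image_of_injective _ hVinj, Finset.card_univ, hp]
    have hBcard : B.card = p - 1 := by
      rw [hBdef, Finset.card_image_of_injOn (by rwa [SimpleGraph.coe_edgeFinset])]
      omega
    have hABdisj : ∀ a ∈ A, ∀ b ∈ B, b < a := by
      intro a ha b hb
      obtain ⟨v, _, rfl⟩ := Finset.mem_image.1 ha
      obtain ⟨e, he, rfl⟩ := Finset.mem_image.1 hb
      exact hEV v e (SimpleGraph.mem_edgeFinset.1 he)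
    have hABunion : A ∪ B = Finset.Icc 1 (2 * p - 1) := by
      apply Finset.coe_injective
      rw [Finset.coe_union, Finset.coe_Icc, hAdef, hBdef, Finset.coe_image,
        Finset.coe_image, Finset.coe_univ, Set.image_univ, SimpleGraph.coe_edgeFinset]
      exact hrange
    have hA : A = Finset.Icc p (2 * p - 1) := by
      apply Finset.eq_of_subset_of_card_le
      · intro a ha
        have ha' : a ∈ Finset.Icc 1 (2 * p - 1) := hABunion ▸ Finset.mem_union_left _ ha
        rw [Finset.mem_Icc] at ha' ⊢
        refine ⟨?_, ha'.2⟩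
        by_contra hlt
        push_neg at hlt
        have hBsub : B ⊆ Finset.Icc 1 (a - 1) := by
          intro b hb
          have hb1 : b ∈ Finset.Icc 1 (2 * p - 1) := hABunion ▸ Finset.mem_union_right _ hb
          have hba := hABdisj a ha b hb
          rw [Finset.mem_Icc] at hb1 ⊢
          omega
        have := Finset.card_le_card hBsub
        rw [hBcard, Nat.card_Icc] at this
        omega
      · rw [Nat.card_Icc, hAcard]; omega
    have hVv : ∀ v, p ≤ fV v ∧ fV v ≤ 2 * p - 1 := by
      intro v
      have : fV v ∈ A := Finset.mem_image_of_mem fV (Finset.mem_univ v)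
      rw [hA, Finset.mem_Icc] at this
      exact this
    have hpA : (p : ℕ) ∈ A := by rw [hA, Finset.mem_Icc]; omega
    have hB : B = Finset.Icc 1 (p - 1) := by
      apply Finset.eq_of_subset_of_card_le
      · intro b hb
        have hb1 : b ∈ Finset.Icc 1 (2 * p - 1) := hABunion ▸ Finset.mem_union_right _ hb
        have := hABdisj p hpA b hb
        rw [Finset.mem_Icc] at hb1 ⊢
        omega
      · rw [Nat.card_Icc, hBcard]; omega
    refine ⟨fun v => fV v - p, ?_, ?_, ?_, ?_⟩
    · intro a b hab
      have h1 := hVv a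
      have h2 := hVv b
      apply hVinj
      have hab' : fV a - p = fV b - p := hab
      omega
    · intro v
      rw [← hp]
      have := hVv v
      show fV v - p < p
      omega
    · ext m
      simp only [Set.mem_setOf_eq, Set.mem_Icc, ← hp]
      constructor
      · rintro ⟨u, v, huv, rfl⟩
        have h1 := hVv u
        have h2 := hVv v
        have hne : fV u ≠ fV v := fun h => huv.ne (hVinj h)
        show 1 ≤ max (fV u - p) (fV v - p) - min (fV u - p) (fV v - p) ∧
          max (fV u - p) (fV v - p) - min (fV u - p) (fV v - p) ≤ p - 1
        rcases le_total (fV u) (fV v) with h | h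
        · rw [max_eq_right (Nat.sub_le_sub_right h p), min_eq_left (Nat.sub_le_sub_right h p)]
          omega
        · rw [max_eq_left (Nat.sub_le_sub_right h p), min_eq_right (Nat.sub_le_sub_right h p)]
          omega
      · rintro ⟨hm1, hm2⟩
        have hmB : m ∈ B := by rw [hB, Finset.mem_Icc]; exact ⟨hm1, hm2⟩
        obtain ⟨e, he, hfe⟩ := Finset.mem_image.1 hmB
        rw [SimpleGraph.mem_edgeFinset] at he
        induction e using Sym2.ind with
        | _ u v =>
          rw [SimpleGraph.mem_edgeSet] at he
          obtain ⟨x, y, hxy, hxyeq⟩ := hee u v he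
          refine ⟨x, y, hxy, ?_⟩
          have hx := hVv x
          have hy := hVv y
          rw [hfe] at hxyeq
          show m = max (fV x - p) (fV y - p) - min (fV x - p) (fV y - p)
          rcases le_total (fV x) (fV y) with h | h
          · rw [max_eq_right h, min_eq_left h] at hxyeq
            rw [max_eq_right (Nat.sub_le_sub_right h p), min_eq_left (Nat.sub_le_sub_right h p)]
            omega
          · rw [max_eq_left h, min_eq_right h] at hxyeq
            rw [max_eq_left (Nat.sub_le_sub_right h p), min_eq_right (Nat.sub_le_sub_right h p)]
            omega
    · intro x hx y hy
      have := hXY x hx y hy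
      have h1 := hVv x
      have h2 := hVv y
      show fV x - p < fV y - p
      omega
  exact ⟨⟨fun ⟨f, hf⟩ => ⟨_, _, fwd f hf⟩, bwd⟩, fwd⟩
end

section
/- Let G be a bipartite graph with p vertices and q edges admitting a set-ordered graceful labelling f with bipartition (X,Y), X = {x₁,...,xₛ}, Y = {y₁,...,yₜ}, f(xᵢ) = i−1, f(yⱼ) = s+j−1. Define F on vertices and edges by F(xᵢ) = {0,...,i−1}, F(yⱼ) = {0,...,s+j−1}, and F(xᵢyⱼ) = F(yⱼ) \ F(xᵢ) = {i,...,s+j−1} for each edge xᵢyⱼ. Then: (a) F is injective on V(G) ∪ E(G) (all assigned sets are pairwise distinct as sets when the underlying elements are distinct); (b) the multiset of cardinalities {|F(xᵢyⱼ)| : xᵢyⱼ ∈ E(G)} equals {1,2,...,q}; (c) F(xᵢ) ⊊ F(yⱼ) for every edge xᵢyⱼ. -/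
/-- From a set-ordered graceful labelling `f` of a bipartite `(p,q)`-graph `G` with
bipartition `(X,Y)` (normalized so that `F(xᵢ) = {0,...,i-1} = {0,...,f(xᵢ)}` etc.), the
total set-labelling `F(v) = {0,...,f(v)}` on vertices and
`F(uv) = {0,...,f(v)} \ {0,...,f(u)} = {f(u)+1,...,f(v)}` on edges satisfies:
(a) all assigned sets are pairwise distinct; (b) the multiset of cardinalities of the
edge sets is exactly `{1,2,...,q}`; (c) `F(u) ⊊ F(v)` for every edge `uv` with
`u ∈ X`. -/
theorem graceful_total_set_labelling {V : Type*} [Fintype V] [DecidableEq V]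
    (G : SimpleGraph V) [DecidableRel G.Adj]
    (X Y : Finset V) (hpart : ∀ v, v ∈ X ↔ v ∉ Y)
    (hbip : ∀ u v, G.Adj u v → (u ∈ X ∧ v ∈ Y) ∨ (u ∈ Y ∧ v ∈ X))
    (q : ℕ) (hq : q = G.edgeFinset.card)
    (f : V → ℕ) (hinj : Function.Injective f) (hle : ∀ v, f v ≤ q)
    (hgrace : {d : ℕ | ∃ u v, G.Adj u v ∧ d = max (f u) (f v) - min (f u) (f v)}
        = Set.Icc 1 q)
    (hso : ∀ x ∈ X, ∀ y ∈ Y, f x < f y) :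
    letI FV : V → Finset ℕ := fun v => Finset.Iic (f v)
    letI FE : Sym2 V → Finset ℕ :=
      Sym2.lift ⟨fun u v => Finset.Ioc (min (f u) (f v)) (max (f u) (f v)),
        fun u v => by dsimp only; rw [max_comm, min_comm]⟩
    (Function.Injective FV ∧ Set.InjOn FE G.edgeSet ∧
      (∀ v, ∀ e ∈ G.edgeSet, FV v ≠ FE e)) ∧
    (G.edgeFinset.val.map (fun e => (FE e).card) = (Finset.Icc 1 q).val) ∧
    (∀ u v, G.Adj u v → u ∈ X → FV u ⊂ FV v) := by
  set FV : V → Finset ℕ := fun v => Finset.Iic (f v) with hFVd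
  set FE : Sym2 V → Finset ℕ :=
    Sym2.lift ⟨fun u v => Finset.Ioc (min (f u) (f v)) (max (f u) (f v)),
      fun u v => by dsimp only; rw [max_comm, min_comm]⟩ with hFEd
  have hIicInj : Function.Injective (fun n : ℕ => Finset.Iic n) := by
    intro a b h
    dsimp only at h
    have ha : a ∈ Finset.Iic b := by rw [← h]; simp
    have hb : b ∈ Finset.Iic a := by rw [h]; simp
    simp at ha hb; omega
  have hFE : ∀ u v : V, FE s(u, v) = Finset.Ioc (min (f u) (f v)) (max (f u) (f v)) := by
    intro u v; rfl
  have hne : ∀ u v : V, G.Adj u v → f u ≠ f v := by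
    intro u v h hf
    exact G.ne_of_adj h (hinj hf)
  refine ⟨⟨?_, ?_, ?_⟩, ?_, ?_⟩
  · intro a b h
    exact hinj (hIicInj h)
  · intro e he e' he' h
    induction e using Sym2.ind with
    | _ u v =>
    induction e' using Sym2.ind with
    | _ u' v' =>
    rw [SimpleGraph.mem_edgeSet] at he he'
    rw [hFE, hFE] at h
    have h1 : min (f u) (f v) < max (f u) (f v) := by
      have := hne u v he; omega
    have h2 : min (f u') (f v') < max (f u') (f v') := by
      have := hne u' v' he'; omega
    have hmax : max (f u) (f v) = max (f u') (f v') := by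
      have hm : max (f u) (f v) ∈ Finset.Ioc (min (f u') (f v')) (max (f u') (f v')) := by
        rw [← h]; simp; omega
      have hm' : max (f u') (f v') ∈ Finset.Ioc (min (f u) (f v)) (max (f u) (f v)) := by
        rw [h]; simp; omega
      simp at hm hm'; omega
    have hmin : min (f u) (f v) = min (f u') (f v') := by
      have hm : min (f u) (f v) + 1 ∈ Finset.Ioc (min (f u') (f v')) (max (f u') (f v')) := by
        rw [← h]; simp; omega
      have hm' : min (f u') (f v') + 1 ∈ Finset.Ioc (min (f u) (f v)) (max (f u) (f v)) := by
        rw [h]; simp; omega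
      simp at hm hm'; omega
    rw [Sym2.eq_iff]
    rcases le_total (f u) (f v) with h3 | h3 <;> rcases le_total (f u') (f v') with h4 | h4 <;>
      [ (left; constructor); (right; constructor); (right; constructor); (left; constructor) ] <;>
      apply hinj <;> omega
  · intro v e he h
    induction e using Sym2.ind with
    | _ a b =>
    have h0 : (0 : ℕ) ∈ FV v := by simp [FV]
    rw [h, hFE] at h0
    simp at h0
  · -- part (b)
    have hcard : ∀ u v : V, (FE s(u, v)).card = max (f u) (f v) - min (f u) (f v) := by
      intro u v; rw [hFE]; simp
    set M : Multiset ℕ := G.edgeFinset.val.map (fun e => (FE e).card) with hM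
    have hMcard : Multiset.card M = q := by
      rw [hM, Multiset.card_map, hq]; rfl
    have hmem : ∀ d, d ∈ M ↔ d ∈ Finset.Icc 1 q := by
      intro d
      have := Set.ext_iff.mp hgrace d
      simp only [Set.mem_setOf_eq, Set.mem_Icc] at this
      constructor
      · intro hd
        rw [hM, Multiset.mem_map] at hd
        obtain ⟨e, he, hde⟩ := hd
        induction e using Sym2.ind with
        | _ u v =>
        rw [← Finset.mem_def, SimpleGraph.mem_edgeFinset, SimpleGraph.mem_edgeSet] at he
        rw [Finset.mem_Icc, ← this]
        exact ⟨u, v, he, by rw [← hde, hcard]⟩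
      · intro hd
        rw [Finset.mem_Icc, ← this] at hd
        obtain ⟨u, v, huv, hdv⟩ := hd
        rw [hM, Multiset.mem_map]
        exact ⟨s(u, v), by rwa [← Finset.mem_def, SimpleGraph.mem_edgeFinset,
          SimpleGraph.mem_edgeSet], by rw [hcard]; omega⟩
    have htF : M.toFinset = Finset.Icc 1 q := by
      ext d; rw [Multiset.mem_toFinset]; exact hmem d
    have hnd : M.Nodup := by
      rw [← Multiset.toFinset_card_eq_card_iff_nodup, htF, Nat.card_Icc, hMcard]
      omega
    rw [← htF]
    exact ((Multiset.toFinset_val M).trans hnd.dedup).symm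
  · intro u v huv hu
    have hv : v ∈ Y := by
      rcases hbip u v huv with ⟨_, hv⟩ | ⟨hu', _⟩
      · exact hv
      · exact absurd hu' ((hpart u).mp hu)
    have hlt := hso u hu v hv
    simp only [FV]
    rw [Finset.ssubset_iff_of_subset (by intro x hx; simp at hx ⊢; omega)]
    exact ⟨f v, by simp, by simp; omega⟩
end

section
/- Let G be a bipartite graph with bipartition (X,Y) admitting an injective vertex labelling f : V(G) → ℕ. Let H be a disjoint copy of G with corresponding bipartition (X',Y') and labelling f' copying f, and form G⊖H by adding a single edge joining a vertex u ∈ V(G) to its copy u' ∈ V(H). Let p = |V(G)|. Define g on V(G⊖H) by g(x) = f(x) for x ∈ X, g(y') = f'(y') for y' ∈ Y', g(w) = f'(w) + p for w ∈ X', and g(z) = f(z) + p for z ∈ Y. Then G⊖H is bipartite with bipartition (X ∪ Y', X' ∪ Y), g is injective, and max g(X ∪ Y') < min g(X' ∪ Y) provided f takes values in {0,...,p−1}. -/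
/-- The graph `G ⊖ H` where `H` is a disjoint copy of `G` (on the second summand of
`V ⊕ V`) and one extra edge joins the vertex `u₀` of `G` with its copy. -/
def ominus {V : Type*} (G : SimpleGraph V) (u₀ : V) : SimpleGraph (V ⊕ V) :=
  SimpleGraph.fromRel (fun a b =>
    (∃ u v, a = Sum.inl u ∧ b = Sum.inl v ∧ G.Adj u v) ∨
    (∃ u v, a = Sum.inr u ∧ b = Sum.inr v ∧ G.Adj u v) ∨
    (a = Sum.inl u₀ ∧ b = Sum.inr u₀))

/-- Let `G` be bipartite with bipartition `(X,Y)` and let `f : V(G) → {0,...,p-1}` be an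
injective labelling, `p = |V(G)|`. Form `G ⊖ H` by joining `G` to a disjoint copy `H`
(with bipartition `(X',Y')` and the copied labelling) by one edge `u₀u₀'`, and define
`g(x) = f(x)` on `X`, `g(y') = f(y')` on `Y'`, `g(w) = f(w) + p` on `X'` and
`g(z) = f(z) + p` on `Y`. Then `G ⊖ H` is bipartite with bipartition
`(X ∪ Y', X' ∪ Y)`, `g` is injective, and `max g(X ∪ Y') < min g(X' ∪ Y)`. -/
theorem ominus_set_ordered {V : Type*} [Fintype V] [DecidableEq V]
    (G : SimpleGraph V)
    (X Y : Finset V) (hpart : ∀ v, v ∈ X ↔ v ∉ Y)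
    (hbip : ∀ u v, G.Adj u v → (u ∈ X ∧ v ∈ Y) ∨ (u ∈ Y ∧ v ∈ X))
    (u₀ : V) (f : V → ℕ) (hinj : Function.Injective f)
    (hlt : ∀ v, f v < Fintype.card V) :
    letI p := Fintype.card V
    letI g : V ⊕ V → ℕ := fun a => match a with
      | Sum.inl x => if x ∈ X then f x else f x + p
      | Sum.inr x => if x ∈ X then f x + p else f x
    letI A : Set (V ⊕ V) := (Sum.inl '' ↑X) ∪ (Sum.inr '' ↑Y)
    letI B : Set (V ⊕ V) := (Sum.inr '' ↑X) ∪ (Sum.inl '' ↑Y)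
    (∀ a b, (ominus G u₀).Adj a b → (a ∈ A ∧ b ∈ B) ∨ (a ∈ B ∧ b ∈ A)) ∧
    Function.Injective g ∧
    (∀ a ∈ A, ∀ b ∈ B, g a < g b) := by
  set p := Fintype.card V with hpdef
  set A : Set (V ⊕ V) := (Sum.inl '' ↑X) ∪ (Sum.inr '' ↑Y) with hA
  set B : Set (V ⊕ V) := (Sum.inr '' ↑X) ∪ (Sum.inl '' ↑Y) with hB
  have hp : ∀ v, f v < p := hlt
  have hY : ∀ v, v ∈ Y ↔ v ∉ X := by intro v; rw [hpart v]; tauto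
  have memA_inl : ∀ u, u ∈ X → Sum.inl u ∈ A := fun u hu => Or.inl ⟨u, hu, rfl⟩
  have memA_inr : ∀ u, u ∈ Y → Sum.inr u ∈ A := fun u hu => Or.inr ⟨u, hu, rfl⟩
  have memB_inr : ∀ u, u ∈ X → Sum.inr u ∈ B := fun u hu => Or.inl ⟨u, hu, rfl⟩
  have memB_inl : ∀ u, u ∈ Y → Sum.inl u ∈ B := fun u hu => Or.inr ⟨u, hu, rfl⟩
  have key : ∀ a b : V ⊕ V,
      ((∃ u v, a = Sum.inl u ∧ b = Sum.inl v ∧ G.Adj u v) ∨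
       (∃ u v, a = Sum.inr u ∧ b = Sum.inr v ∧ G.Adj u v) ∨
       (a = Sum.inl u₀ ∧ b = Sum.inr u₀)) →
      (a ∈ A ∧ b ∈ B) ∨ (a ∈ B ∧ b ∈ A) := by
    rintro a b (⟨u, v, rfl, rfl, huv⟩ | ⟨u, v, rfl, rfl, huv⟩ | ⟨rfl, rfl⟩)
    · rcases hbip u v huv with ⟨hu, hv⟩ | ⟨hu, hv⟩
      · exact Or.inl ⟨memA_inl u hu, memB_inl v hv⟩
      · exact Or.inr ⟨memB_inl u hu, memA_inl v hv⟩
    · rcases hbip u v huv with ⟨hu, hv⟩ | ⟨hu, hv⟩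
      · exact Or.inr ⟨memB_inr u hu, memA_inr v hv⟩
      · exact Or.inl ⟨memA_inr u hu, memB_inr v hv⟩
    · by_cases h : u₀ ∈ X
      · exact Or.inl ⟨memA_inl u₀ h, memB_inr u₀ h⟩
      · have h' : u₀ ∈ Y := (hY u₀).mpr h
        exact Or.inr ⟨memB_inl u₀ h', memA_inr u₀ h'⟩
  refine ⟨?_, ?_, ?_⟩
  · intro a b hab
    rw [ominus, SimpleGraph.fromRel_adj] at hab
    rcases hab.2 with h | h
    · exact key a b h
    · exact ((key b a h).symm).imp And.symm And.symm
  · intro a b hab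
    cases a with
    | inl x =>
      cases b with
      | inl y =>
        dsimp only at hab
        split_ifs at hab with h1 h2 h2
        · exact congrArg _ (hinj hab)
        · have := hp x; have := hp y; omega
        · have := hp x; have := hp y; omega
        · have : f x = f y := by omega
          exact congrArg _ (hinj this)
      | inr y =>
        dsimp only at hab
        split_ifs at hab with h1 h2 h2
        · have := hp x; have := hp y; omega
        · exact absurd (hinj hab ▸ h1) h2
        · have : f x = f y := by omega
          exact absurd (hinj this ▸ h2) h1
        · have := hp x; have := hp y; omega
    | inr x =>
      cases b with
      | inl y =>
        dsimp only at hab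
        split_ifs at hab with h1 h2 h2
        · have := hp x; have := hp y; omega
        · have : f x = f y := by omega
          exact absurd (hinj this ▸ h1) h2
        · exact absurd (hinj hab ▸ h2) h1
        · have := hp x; have := hp y; omega
      | inr y =>
        dsimp only at hab
        split_ifs at hab with h1 h2 h2
        · have : f x = f y := by omega
          exact congrArg _ (hinj this)
        · have := hp x; have := hp y; omega
        · have := hp x; have := hp y; omega
        · exact congrArg _ (hinj hab)
  · intro a ha b hb
    have hYX : ∀ v, v ∈ (↑Y : Set V) → v ∉ X := fun v hv => (hY v).mp (Finset.mem_coe.mp hv)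
    rcases ha with ⟨x, hx, rfl⟩ | ⟨x, hx, rfl⟩ <;>
      rcases hb with ⟨y, hy, rfl⟩ | ⟨y, hy, rfl⟩ <;> dsimp only
    · rw [if_pos (Finset.mem_coe.mp hx), if_pos (Finset.mem_coe.mp hy)]
      have := hp x; omega
    · rw [if_pos (Finset.mem_coe.mp hx), if_neg (hYX y hy)]
      have := hp x; omega
    · rw [if_neg (hYX x hx), if_pos (Finset.mem_coe.mp hy)]
      have := hp x; omega
    · rw [if_neg (hYX x hx), if_neg (hYX y hy)]
      have := hp x; omega
end
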